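/- arXiv:2402.17615 — 6 statements merged into one kernel-verified Lean document; each statement's English description precedes it below -/
import Mathlib

section
/- If every bias function β_{i,j} is in region R, then the clamped update μ(B)_i = clamp_{[0,1]}(B_i + Σ_{j∈A_i} w_{j,i} β_{i,j}(B_j − B_i)) equals the unclamped value B_i + Σ_{j∈A_i} w_{j,i} β_{i,j}(B_j − B_i), i.e., the clamp is never active. -/
/-!
A bias in region R moves the belief difference `x = B j - B i` towards `0`, so `β x` lies
between `0` and `x`, hence in `[-B i, 1 - B i]` whenever both beliefs lie in `[0, 1]`.
The update adds to `B i` a convex combination of such values (or nothing, for an empty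
neighbourhood), so it stays in `[0, 1]` and the clamp does nothing.
-/

/-- A bias function is in the receptive-resistant region R. -/
def InRegionR (β : ℝ → ℝ) : Prop :=
  (∀ x : ℝ, x < 0 → x < β x ∧ β x < 0) ∧
  (∀ x : ℝ, 0 < x → 0 < β x ∧ β x < x) ∧
  β 0 = 0

/-- Clamp a real number to the interval [0,1]. -/
def clamp01 (r : ℝ) : ℝ := min (max r 0) 1

open Set

theorem InRegionR.mem_uIcc {β : ℝ → ℝ} (hβ : InRegionR β) (x : ℝ) : β x ∈ uIcc 0 x := by
  obtain ⟨hneg, hpos, hzero⟩ := hβ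
  rcases lt_trichotomy x 0 with hx | rfl | hx
  · obtain ⟨h₁, h₂⟩ := hneg x hx
    exact Icc_subset_uIcc' ⟨h₁.le, h₂.le⟩
  · simp [hzero]
  · obtain ⟨h₁, h₂⟩ := hpos x hx
    exact Icc_subset_uIcc ⟨h₁.le, h₂.le⟩

theorem InRegionR.apply_sub_mem_Icc {β : ℝ → ℝ} (hβ : InRegionR β) {a b : ℝ}
    (ha : a ∈ Icc (0 : ℝ) 1) (hb : b ∈ Icc (0 : ℝ) 1) : β (b - a) ∈ Icc (-a) (1 - a) := by
  obtain ⟨ha₀, ha₁⟩ := ha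
  obtain ⟨hb₀, hb₁⟩ := hb
  exact uIcc_subset_Icc ⟨by linarith, by linarith⟩ ⟨by linarith, by linarith⟩
    (hβ.mem_uIcc (b - a))

theorem clamp01_eq_self {r : ℝ} (hr : r ∈ Icc (0 : ℝ) 1) : clamp01 r = r := by
  rw [clamp01, max_eq_left hr.1, min_eq_left hr.2]

theorem stmt_2_general {A : Type*}
    (B : A → ℝ) (hB : ∀ k, B k ∈ Set.Icc (0:ℝ) 1)
    (N : A → Finset A) (w : A → A → ℝ)
    (hw : ∀ i, ∀ j ∈ N i, 0 ≤ w j i)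
    (hsum : ∀ i, (N i).Nonempty → ∑ j ∈ N i, w j i = 1)
    (β : A → A → ℝ → ℝ) (hβ : ∀ i, ∀ j ∈ N i, InRegionR (β i j)) :
    ∀ i : A,
      clamp01 (B i + ∑ j ∈ N i, w j i * β i j (B j - B i)) =
        B i + ∑ j ∈ N i, w j i * β i j (B j - B i) := by
  intro i
  have hshift : ∑ j ∈ N i, w j i * β i j (B j - B i) ∈ Icc (-B i) (1 - B i) := by
    rcases (N i).eq_empty_or_nonempty with hN | hN
    · simpa [hN] using hB i
    · exact (convex_Icc _ _).sum_mem (hw i) (hsum i hN) fun j hj =>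
        (hβ i j hj).apply_sub_mem_Icc (hB i) (hB j)
  exact clamp01_eq_self ⟨by linarith [hshift.1], by linarith [hshift.2]⟩

theorem stmt_2 {A : Type*} [Fintype A] [DecidableEq A]
    (B : A → ℝ) (hB : ∀ k, B k ∈ Set.Icc (0:ℝ) 1)
    (N : A → Finset A) (w : A → A → ℝ)
    (hw : ∀ i, ∀ j ∈ N i, 0 ≤ w j i)
    (hsum : ∀ i, (N i).Nonempty → ∑ j ∈ N i, w j i = 1)
    (β : A → A → ℝ → ℝ) (hβ : ∀ i, ∀ j ∈ N i, InRegionR (β i j)) :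
    ∀ i : A,
      clamp01 (B i + ∑ j ∈ N i, w j i * β i j (B j - B i)) =
        B i + ∑ j ∈ N i, w j i * β i j (B j - B i) :=
  stmt_2_general B hB N w hw hsum β hβ
end

section
/- Under bias updates with all biases in region R, the sequence of maxima t ↦ max_i B^t_i is monotonically non-increasing and the sequence of minima t ↦ min_i B^t_i is monotonically non-decreasing; hence both sequences converge. -/
open Filter

/-!
A bias function in region R moves `x` towards `0` without overshooting, so `β x` lies between `0`
and `x`. Hence each agent's update is a weighted average of moves from `B t i` towards values in
`[min B t, max B t]` that stay inside that interval: the new belief cannot leave the current range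
of beliefs. So the maximum never increases and the minimum never decreases, and since the minimum
stays below the maximum, both sequences are monotone and bounded, hence convergent.
-/

namespace InRegionR

variable {β : ℝ → ℝ}

theorem apply_le_max (hβ : InRegionR β) (x : ℝ) : β x ≤ max x 0 := by
  obtain ⟨hneg, hpos, hzero⟩ := hβ
  rcases lt_trichotomy x 0 with h | rfl | h
  · exact (hneg x h).2.le.trans (le_max_right _ _)
  · simp [hzero]
  · exact (hpos x h).2.le.trans (le_max_left _ _)

theorem neg_comp_neg (hβ : InRegionR β) : InRegionR (fun x => -β (-x)) := by
  obtain ⟨hneg, hpos, hzero⟩ := hβ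
  refine ⟨fun x hx => ?_, fun x hx => ?_, by simp [hzero]⟩
  · obtain ⟨h₁, h₂⟩ := hpos (-x) (neg_pos.mpr hx)
    constructor <;> linarith
  · obtain ⟨h₁, h₂⟩ := hneg (-x) (neg_neg_iff_pos.mpr hx)
    constructor <;> linarith

end InRegionR

section BiasUpdate

variable {ι : Type*} (s : Finset ι) (w : ι → ℝ) (f : ι → ℝ → ℝ) (x : ι → ℝ) (b : ℝ)

theorem bias_update_le (hw : ∀ j ∈ s, 0 ≤ w j) (hsum : s.Nonempty → ∑ j ∈ s, w j = 1)
    (hf : ∀ j ∈ s, InRegionR (f j)) {M : ℝ} (hb : b ≤ M) (hx : ∀ j ∈ s, x j ≤ M) :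
    b + ∑ j ∈ s, w j * f j (x j - b) ≤ M := by
  rcases s.eq_empty_or_nonempty with rfl | hne
  · simpa using hb
  have hterm : ∀ j ∈ s, w j * f j (x j - b) ≤ w j * (M - b) := fun j hj =>
    mul_le_mul_of_nonneg_left
      (((hf j hj).apply_le_max _).trans (max_le (by linarith [hx j hj]) (by linarith)))
      (hw j hj)
  calc b + ∑ j ∈ s, w j * f j (x j - b)
      ≤ b + ∑ j ∈ s, w j * (M - b) := add_le_add_right (Finset.sum_le_sum hterm) _
    _ = M := by rw [← Finset.sum_mul, hsum hne]; ring

theorem le_bias_update (hw : ∀ j ∈ s, 0 ≤ w j) (hsum : s.Nonempty → ∑ j ∈ s, w j = 1)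
    (hf : ∀ j ∈ s, InRegionR (f j)) {m : ℝ} (hb : m ≤ b) (hx : ∀ j ∈ s, m ≤ x j) :
    m ≤ b + ∑ j ∈ s, w j * f j (x j - b) := by
  have := bias_update_le s w (fun j y => -f j (-y)) (-x) (-b) hw hsum
    (fun j hj => (hf j hj).neg_comp_neg) (neg_le_neg hb) (fun j hj => neg_le_neg (hx j hj))
  simp only [Pi.neg_apply, neg_sub_neg, neg_sub, mul_neg, Finset.sum_neg_distrib] at this
  linarith

end BiasUpdate

theorem exists_tendsto_of_antitone_of_monotone_of_le {u v : ℕ → ℝ} (hu : Antitone u)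
    (hv : Monotone v) (hvu : ∀ t, v t ≤ u t) :
    (∃ U, Tendsto u atTop (nhds U)) ∧ ∃ L, Tendsto v atTop (nhds L) :=
  ⟨⟨_, tendsto_atTop_ciInf hu ⟨v 0, by rintro _ ⟨t, rfl⟩; exact (hv t.zero_le).trans (hvu t)⟩⟩,
    ⟨_, tendsto_atTop_ciSup hv ⟨u 0, by rintro _ ⟨t, rfl⟩; exact (hvu t).trans (hu t.zero_le)⟩⟩⟩

theorem stmt_3_general {A : Type*} [Fintype A] [Nonempty A]
    (N : A → Finset A) (w : A → A → ℝ)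
    (hw : ∀ i, ∀ j ∈ N i, 0 ≤ w j i)
    (hsum : ∀ i, (N i).Nonempty → ∑ j ∈ N i, w j i = 1)
    (β : A → A → ℝ → ℝ) (hβ : ∀ i, ∀ j ∈ N i, InRegionR (β i j))
    (B : ℕ → A → ℝ)
    (hupd : ∀ t i, B (t+1) i = B t i + ∑ j ∈ N i, w j i * β i j (B t j - B t i)) :
    Antitone (fun t => Finset.univ.sup' Finset.univ_nonempty (B t)) ∧
    Monotone (fun t => Finset.univ.inf' Finset.univ_nonempty (B t)) ∧
    (∃ U : ℝ, Tendsto (fun t => Finset.univ.sup' Finset.univ_nonempty (B t)) atTop (nhds U)) ∧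
    (∃ L : ℝ, Tendsto (fun t => Finset.univ.inf' Finset.univ_nonempty (B t)) atTop (nhds L)) := by
  have le_max t i : B t i ≤ Finset.univ.sup' Finset.univ_nonempty (B t) :=
    Finset.le_sup' _ (Finset.mem_univ i)
  have min_le t i : Finset.univ.inf' Finset.univ_nonempty (B t) ≤ B t i :=
    Finset.inf'_le _ (Finset.mem_univ i)
  have hanti : Antitone (fun t => Finset.univ.sup' Finset.univ_nonempty (B t)) :=
    antitone_nat_of_succ_le fun t => Finset.sup'_le _ _ fun i _ => by
      rw [hupd]
      exact bias_update_le _ _ _ _ _ (hw i) (hsum i) (hβ i) (le_max t i) fun j _ => le_max t j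
  have hmono : Monotone (fun t => Finset.univ.inf' Finset.univ_nonempty (B t)) :=
    monotone_nat_of_le_succ fun t => Finset.le_inf' _ _ fun i _ => by
      rw [hupd]
      exact le_bias_update _ _ _ _ _ (hw i) (hsum i) (hβ i) (min_le t i) fun j _ => min_le t j
  obtain ⟨i⟩ := ‹Nonempty A›
  exact ⟨hanti, hmono, exists_tendsto_of_antitone_of_monotone_of_le hanti hmono
    fun t => (min_le t i).trans (le_max t i)⟩

theorem stmt_3 {A : Type*} [Fintype A] [Nonempty A] [DecidableEq A]
    (N : A → Finset A) (w : A → A → ℝ)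
    (hw : ∀ i, ∀ j ∈ N i, 0 ≤ w j i)
    (hsum : ∀ i, (N i).Nonempty → ∑ j ∈ N i, w j i = 1)
    (β : A → A → ℝ → ℝ) (hβ : ∀ i, ∀ j ∈ N i, InRegionR (β i j))
    (B : ℕ → A → ℝ) (hB0 : ∀ k, B 0 k ∈ Set.Icc (0:ℝ) 1)
    (hupd : ∀ t i, B (t+1) i = B t i + ∑ j ∈ N i, w j i * β i j (B t j - B t i)) :
    Antitone (fun t => Finset.univ.sup' Finset.univ_nonempty (B t)) ∧
    Monotone (fun t => Finset.univ.inf' Finset.univ_nonempty (B t)) ∧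
    (∃ U : ℝ, Tendsto (fun t => Finset.univ.sup' Finset.univ_nonempty (B t)) atTop (nhds U)) ∧
    (∃ L : ℝ, Tendsto (fun t => Finset.univ.inf' Finset.univ_nonempty (B t)) atTop (nhds L)) :=
  stmt_3_general N w hw hsum β hβ B hupd
end

section
/- (Extreme Agents Reduction) Suppose all biases are in region R, min(B) ≠ max(B), and let M = max(B). If the influence graph contains a directed path i_1,…,i_m with B_{i_1} < M and B_{i_m} = M, then the number of agents j with μ(B)_j ≥ M is strictly smaller than the number of agents j with B_j ≥ M. -/
open Finset

/-!
An agent below the maximum `M` only hears biases at most `M`, and a bias function in `R` never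
overshoots, so it stays below `M`; hence the set of extreme agents can only shrink. It shrinks
strictly at an agent of the path holding `M` whose predecessor on the path lies below `M`:
all its influencers are at most `M`, one strictly below, so its weighted average pull is negative.
-/

namespace InRegionR

variable {β : ℝ → ℝ}

lemma apply_lt_of_le_of_pos (hβ : InRegionR β) {x y : ℝ} (hxy : x ≤ y) (hy : 0 < y) :
    β x < y := by
  rcases lt_trichotomy x 0 with hx | rfl | hx
  · linarith [(hβ.1 x hx).2]
  · rwa [hβ.2.2]
  · linarith [(hβ.2.1 x hx).2]

lemma apply_nonpos (hβ : InRegionR β) {x : ℝ} (hx : x ≤ 0) : β x ≤ 0 := by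
  rcases hx.lt_or_eq with hx | rfl
  · exact (hβ.1 x hx).2.le
  · exact hβ.2.2.le

lemma apply_neg (hβ : InRegionR β) {x : ℝ} (hx : x < 0) : β x < 0 :=
  (hβ.1 x hx).2

end InRegionR

lemma Finset.sum_div_sum_mul_lt {ι : Type*} {s : Finset ι} {w f : ι → ℝ} {c : ℝ}
    (hw : ∀ j ∈ s, 0 < w j) (hle : ∀ j ∈ s, f j ≤ c) (hlt : ∃ j ∈ s, f j < c) :
    ∑ j ∈ s, w j / (∑ k ∈ s, w k) * f j < c := by
  obtain ⟨j₀, hj₀, hfj₀⟩ := hlt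
  have hT : 0 < ∑ k ∈ s, w k := sum_pos hw ⟨j₀, hj₀⟩
  calc ∑ j ∈ s, w j / (∑ k ∈ s, w k) * f j
      < ∑ j ∈ s, w j / (∑ k ∈ s, w k) * c :=
        sum_lt_sum (fun j hj => mul_le_mul_of_nonneg_left (hle j hj) (div_pos (hw j hj) hT).le)
          ⟨j₀, hj₀, mul_lt_mul_of_pos_left hfj₀ (div_pos (hw j₀ hj₀) hT)⟩
    _ = c := by rw [← sum_mul, ← sum_div, div_self hT.ne', one_mul]

lemma Nat.exists_lt_not_and_succ {p : ℕ → Prop} {m : ℕ} (h₀ : ¬ p 0) (hm : p m) :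
    ∃ k < m, ¬ p k ∧ p (k + 1) := by
  induction m with
  | zero => exact absurd hm h₀
  | succ m ih =>
    by_cases hpm : p m
    · obtain ⟨k, hk, hk'⟩ := ih hpm
      exact ⟨k, by omega, hk'⟩
    · exact ⟨m, by omega, hpm, hm⟩

section Update

variable {A : Type*} [Fintype A] (I : A → A → ℝ) (β : A → A → ℝ → ℝ) (B : A → ℝ)

/-- The paper's `μ(B)`, with `w_{j,i} = I j i / ∑ k ∈ A_i, I k i`. -/
noncomputable def biasUpdate (i : A) : ℝ :=
  B i + ∑ j ∈ univ.filter (fun j => 0 < I j i),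
    (I j i / ∑ k ∈ univ.filter (fun k => 0 < I k i), I k i) * β i j (B j - B i)

variable {I β B}

lemma biasUpdate_lt_of_lt (hβ : ∀ i j, 0 < I j i → InRegionR (β i j)) {i : A} {c : ℝ}
    (hc : ∀ j, B j ≤ c) (hi : B i < c) : biasUpdate I β B i < c := by
  unfold biasUpdate
  rcases (univ.filter fun j => 0 < I j i).eq_empty_or_nonempty with hs | ⟨j₀, hj₀⟩
  · simpa [hs] using hi
  · have hpull := sum_div_sum_mul_lt (c := c - B i) (w := fun j => I j i)
      (f := fun j => β i j (B j - B i)) (fun j hj => (mem_filter.mp hj).2)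
      (fun j hj => ((hβ i j (mem_filter.mp hj).2).apply_lt_of_le_of_pos
        (by linarith [hc j]) (by linarith)).le)
      ⟨j₀, hj₀, (hβ i j₀ (mem_filter.mp hj₀).2).apply_lt_of_le_of_pos
        (by linarith [hc j₀]) (by linarith)⟩
    linarith

lemma biasUpdate_lt_self (hβ : ∀ i j, 0 < I j i → InRegionR (β i j)) {i : A}
    (hle : ∀ j, B j ≤ B i) {j₀ : A} (hj₀ : 0 < I j₀ i) (hlt : B j₀ < B i) :
    biasUpdate I β B i < B i := by
  unfold biasUpdate
  have hpull := sum_div_sum_mul_lt (c := 0) (w := fun j => I j i)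
    (f := fun j => β i j (B j - B i)) (fun j hj => (mem_filter.mp hj).2)
    (fun j hj => (hβ i j (mem_filter.mp hj).2).apply_nonpos (by linarith [hle j]))
    ⟨j₀, mem_filter.mpr ⟨mem_univ _, hj₀⟩, (hβ i j₀ hj₀).apply_neg (by linarith)⟩
  linarith

end Update

theorem stmt_5_general {A : Type*} [Fintype A] [Nonempty A]
    (I : A → A → ℝ)
    (β : A → A → ℝ → ℝ)
    (hβ : ∀ i j, 0 < I j i → InRegionR (β i j))
    (B : A → ℝ)
    (M : ℝ) (hM : M = Finset.univ.sup' Finset.univ_nonempty B)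
    -- the clamped/unclamped update with normalized weights
    (μB : A → ℝ)
    (hμ : ∀ i, μB i = B i + ∑ j ∈ Finset.univ.filter (fun j => 0 < I j i),
        (I j i / ∑ k ∈ Finset.univ.filter (fun k => 0 < I k i), I k i) * β i j (B j - B i))
    -- a directed path i₁ … iₘ with B i₁ < M and B iₘ = M
    (m : ℕ) (p : ℕ → A)
    (hpath : ∀ k < m, 0 < I (p k) (p (k+1)))
    (hp0 : B (p 0) < M) (hpm : B (p m) = M) :
    (Finset.univ.filter (fun j => M ≤ μB j)).card <
      (Finset.univ.filter (fun j => M ≤ B j)).card := by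
  obtain rfl : μB = biasUpdate I β B := funext hμ
  have hBM : ∀ j, B j ≤ M := fun j => hM ▸ le_sup' B (mem_univ j)
  obtain ⟨k, hkm, hbelow, hreach⟩ :=
    Nat.exists_lt_not_and_succ (p := fun k => M ≤ B (p k)) (by simpa using hp0) hpm.ge
  have hsub : univ.filter (fun j => M ≤ biasUpdate I β B j) ⊆ univ.filter (fun j => M ≤ B j) := by
    intro i
    simp only [mem_filter, mem_univ, true_and]
    exact fun hi => not_lt.mp fun hBi => hi.not_gt (biasUpdate_lt_of_lt hβ hBM hBi)
  have hk₁ : B (p (k + 1)) = M := le_antisymm (hBM _) hreach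
  have hdrop : biasUpdate I β B (p (k + 1)) < M := hk₁ ▸
    biasUpdate_lt_self hβ (fun j => hk₁ ▸ hBM j) (hpath k hkm) (hk₁ ▸ not_le.mp hbelow)
  exact card_lt_card <| (ssubset_iff_of_subset hsub).mpr
    ⟨p (k + 1), by simp [hk₁], by simpa using hdrop⟩

theorem stmt_5 {A : Type*} [Fintype A] [Nonempty A] [DecidableEq A]
    (I : A → A → ℝ) (hI : ∀ j i, 0 ≤ I j i)
    (β : A → A → ℝ → ℝ)
    (hβ : ∀ i j, 0 < I j i → InRegionR (β i j))
    (B : A → ℝ) (hB : ∀ k, B k ∈ Set.Icc (0:ℝ) 1)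
    (M : ℝ) (hM : M = Finset.univ.sup' Finset.univ_nonempty B)
    (hne : Finset.univ.inf' Finset.univ_nonempty B ≠ M)
    -- the clamped/unclamped update with normalized weights
    (μB : A → ℝ)
    (hμ : ∀ i, μB i = B i + ∑ j ∈ Finset.univ.filter (fun j => 0 < I j i),
        (I j i / ∑ k ∈ Finset.univ.filter (fun k => 0 < I k i), I k i) * β i j (B j - B i))
    -- a directed path i₁ … iₘ with B i₁ < M and B iₘ = M
    (m : ℕ) (p : ℕ → A)
    (hpath : ∀ k < m, 0 < I (p k) (p (k+1)))
    (hp0 : B (p 0) < M) (hpm : B (p m) = M) :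
    (Finset.univ.filter (fun j => M ≤ μB j)).card <
      (Finset.univ.filter (fun j => M ≤ B j)).card :=
  stmt_5_general I β hβ B M hM μB hμ m p hpath hp0 hpm
end

section
/- Under bias updates with all biases in R, any agent i with B_i < max(B) satisfies μ(B)_i < max(B); i.e., no agent strictly below the maximum can reach the maximum after one update step. -/
theorem InRegionR.apply_lt {β : ℝ → ℝ} (hβ : InRegionR β) {x c : ℝ} (hxc : x ≤ c) (hc : 0 < c) :
    β x < c := by
  obtain ⟨hneg, hpos, hzero⟩ := hβ
  rcases lt_trichotomy x 0 with hx | rfl | hx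
  · linarith [(hneg x hx).2]
  · rwa [hzero]
  · linarith [(hpos x hx).2]

theorem Finset.sum_mul_lt_of_forall_lt {ι R : Type*} [Ring R] [LinearOrder R] [IsStrictOrderedRing R]
    {s : Finset ι} {w f : ι → R} {c : R}
    (hw : ∀ j ∈ s, 0 < w j) (hsum : s.Nonempty → ∑ j ∈ s, w j = 1) (hc : 0 < c)
    (hf : ∀ j ∈ s, f j < c) : ∑ j ∈ s, w j * f j < c := by
  rcases s.eq_empty_or_nonempty with rfl | hs
  · simpa using hc
  · calc ∑ j ∈ s, w j * f j < ∑ j ∈ s, w j * c :=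
          Finset.sum_lt_sum_of_nonempty hs fun j hj => mul_lt_mul_of_pos_left (hf j hj) (hw j hj)
      _ = c := by rw [← Finset.sum_mul, hsum hs, one_mul]

theorem stmt_6_general {A : Type*} [Fintype A] [Nonempty A]
    (N : A → Finset A) (w : A → A → ℝ)
    (hw : ∀ i, ∀ j ∈ N i, 0 < w j i)
    (hsum : ∀ i, (N i).Nonempty → ∑ j ∈ N i, w j i = 1)
    (β : A → A → ℝ → ℝ) (hβ : ∀ i, ∀ j ∈ N i, InRegionR (β i j))
    (B : A → ℝ)
    (i : A) (hi : B i < Finset.univ.sup' Finset.univ_nonempty B) :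
    B i + ∑ j ∈ N i, w j i * β i j (B j - B i) <
      Finset.univ.sup' Finset.univ_nonempty B := by
  have hgap : 0 < Finset.univ.sup' Finset.univ_nonempty B - B i := sub_pos.mpr hi
  have hstep : ∑ j ∈ N i, w j i * β i j (B j - B i) <
      Finset.univ.sup' Finset.univ_nonempty B - B i :=
    Finset.sum_mul_lt_of_forall_lt (hw i) (hsum i) hgap fun j hj =>
      (hβ i j hj).apply_lt (sub_le_sub_right (Finset.le_sup' B (Finset.mem_univ j)) _) hgap
  linarith

theorem stmt_6 {A : Type*} [Fintype A] [Nonempty A] [DecidableEq A]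
    (N : A → Finset A) (w : A → A → ℝ)
    (hw : ∀ i, ∀ j ∈ N i, 0 < w j i)
    (hsum : ∀ i, (N i).Nonempty → ∑ j ∈ N i, w j i = 1)
    (β : A → A → ℝ → ℝ) (hβ : ∀ i, ∀ j ∈ N i, InRegionR (β i j))
    (B : A → ℝ) (hB : ∀ k, B k ∈ Set.Icc (0:ℝ) 1)
    (i : A) (hi : B i < Finset.univ.sup' Finset.univ_nonempty B) :
    B i + ∑ j ∈ N i, w j i * β i j (B j - B i) <
      Finset.univ.sup' Finset.univ_nonempty B :=
  stmt_6_general N w hw hsum β hβ B i hi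
end

section
/- (Discontinuous bias counterexample) Consider two agents mutually influencing each other with weight 1, both using the bias f(x) = x/8 for |x| ≤ 1/2, f(x) = (x−1/2)/8 for x > 1/2, f(x) = (x+1/2)/8 for x < −1/2, and initial beliefs (1, 0). Then for all t, B^t_1 − B^t_2 > 1/2, so the agents never converge to consensus. -/
open Filter

/-- The discontinuous bias function of the counterexample. -/
noncomputable def f (x : ℝ) : ℝ :=
  if x > 1/2 then (x - 1/2)/8
  else if x < -(1/2) then (x + 1/2)/8
  else x/8

/-!
While the gap `d = B₁ - B₂` exceeds `1/2`, each agent moves towards the other by only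
`(d - 1/2)/8`, so the new gap is `(3d + 1/2)/4`, again larger than `1/2`. The gap therefore
never closes, which rules out a common limit.
-/

lemma f_of_half_lt {x : ℝ} (hx : 1/2 < x) : f x = (x - 1/2)/8 := if_pos hx

lemma f_of_lt_neg_half {x : ℝ} (hx : x < -(1/2)) : f x = (x + 1/2)/8 := by
  rw [f, if_neg (by linarith), if_pos hx]

lemma f_sub_sub_of_half_lt {a b : ℝ} (h : 1/2 < a - b) :
    a + f (b - a) - (b + f (a - b)) = (3 * (a - b) + 1/2) / 4 := by
  rw [f_of_lt_neg_half (by linarith), f_of_half_lt h]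
  ring

lemma not_tendsto_nhds_of_lt_sub {α : Type*} {l : Filter α} [l.NeBot] {x y : α → ℝ}
    {c : ℝ} (hc : 0 < c) (hxy : ∀ t, c < x t - y t) (v : ℝ) :
    ¬ (Tendsto x l (nhds v) ∧ Tendsto y l (nhds v)) := by
  rintro ⟨hx, hy⟩
  have hgap : Tendsto (fun t => x t - y t) l (nhds 0) := by simpa using hx.sub hy
  have : c ≤ 0 := ge_of_tendsto hgap (Eventually.of_forall fun t => (hxy t).le)
  linarith

theorem stmt_15 (B : ℕ → ℝ × ℝ)
    (hB0 : B 0 = (1, 0))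
    (hupd : ∀ t, B (t+1) =
      ((B t).1 + f ((B t).2 - (B t).1), (B t).2 + f ((B t).1 - (B t).2))) :
    (∀ t, (B t).1 - (B t).2 > 1/2) ∧
    ¬ ∃ v : ℝ, Tendsto (fun t => (B t).1) atTop (nhds v) ∧
        Tendsto (fun t => (B t).2) atTop (nhds v) := by
  have hgap : ∀ t, (B t).1 - (B t).2 > 1/2 := by
    intro t
    induction t with
    | zero => rw [hB0]; norm_num
    | succ n ih =>
      rw [hupd n, f_sub_sub_of_half_lt ih]
      linarith
  exact ⟨hgap, fun ⟨v, hv⟩ => not_tendsto_nhds_of_lt_sub one_half_pos hgap v hv⟩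
end

section
/- (Malleable bias counterexample) For the two-agent symmetric update with bias g(x) = arctan(x)/arctan(1), if the disagreement d_t = B^t_2 − B^t_1 satisfies 0 < d_t < 1, then |d_{t+1}| > d_t where d_{t+1} = d_t − 2g(d_t) computed before clamping; in particular disagreement magnitude strictly increases, since g(x) > x for 0 < x < 1. -/
noncomputable def g (x : ℝ) : ℝ := Real.arctan x / Real.arctan 1

theorem Real.strictConcaveOn_arctan : StrictConcaveOn ℝ (Set.Ici 0) Real.arctan := by
  refine StrictAntiOn.strictConcaveOn_of_deriv (convex_Ici 0)
    Real.continuous_arctan.continuousOn ?_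
  rw [Real.deriv_arctan, interior_Ici]
  intro x hx y _ hxy
  dsimp only
  gcongr
  exact hx.le

theorem Real.mul_arctan_one_lt_arctan {x : ℝ} (hx0 : 0 < x) (hx1 : x < 1) :
    x * Real.arctan 1 < Real.arctan x := by
  have h := Real.strictConcaveOn_arctan.2 Set.self_mem_Ici (show (0 : ℝ) ≤ 1 by norm_num)
    zero_ne_one (sub_pos.2 hx1) hx0 (by ring)
  simpa [Real.arctan_zero] using h

theorem lt_g {x : ℝ} (hx0 : 0 < x) (hx1 : x < 1) : x < g x := by
  have hπ : 0 < Real.arctan 1 := by rw [Real.arctan_one]; positivity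
  rw [g, lt_div_iff₀ hπ]
  exact Real.mul_arctan_one_lt_arctan hx0 hx1

theorem lt_abs_sub_two_mul {a b : ℝ} (h : a < b) : a < |a - 2 * b| := by
  rw [abs_sub_comm]
  linarith [le_abs_self (2 * b - a)]

theorem stmt_17 (d : ℝ) (hd0 : 0 < d) (hd1 : d < 1) :
    g d > d ∧ |d - 2 * g d| > d :=
  ⟨lt_g hd0 hd1, lt_abs_sub_two_mul (lt_g hd0 hd1)⟩
end
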